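/- Fix an integer n ≥ 4. Let h : ℝ² → ℝ be defined on {x > 0, y > 0} by h(x,y) = 2(n−1)/x + (n−1)(n−2)/(2y) − (n−2)y/(2x²), and let V = {(x,y) ∈ ℝ² : x > 0, y > 0, x^{n−1} y^{(n−1)(n−2)/2} = 1}. Then h does not have a local maximum on V at the point (1,1); that is, every neighborhood of (1,1) contains a point (x,y) ∈ V with h(x,y) > h(1,1). -/

import Mathlib

/-!
Along the unit-volume curve `s ↦ (s ^ (n - 2), s⁻²)` through the standard metric, the scalar
curvature has derivative `(n - 1)(n - 2)(sⁿ - 1)² / s²ⁿ⁻¹`. This vanishes to second order at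
`s = 1` but is positive elsewhere, so `(1, 1)` is a degenerate critical point past which the
scalar curvature keeps increasing.
-/

open Set Filter Topology

noncomputable def scalarCurvature (n : ℝ) (p : ℝ × ℝ) : ℝ :=
  2 * (n - 1) / p.1 + (n - 1) * (n - 2) / (2 * p.2) - (n - 2) * p.2 / (2 * p.1 ^ 2)

def unitVolume (n : ℝ) : Set (ℝ × ℝ) :=
  {p | 0 < p.1 ∧ 0 < p.2 ∧ p.1 ^ (n - 1) * p.2 ^ ((n - 1) * (n - 2) / 2) = 1}

noncomputable def unitVolumeCurve (n s : ℝ) : ℝ × ℝ := (s ^ (n - 2), (s ^ 2)⁻¹)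

section
variable {n s : ℝ}

@[simp]
lemma unitVolumeCurve_one : unitVolumeCurve n 1 = (1, 1) := by
  simp [unitVolumeCurve]

lemma continuousAt_unitVolumeCurve (hs : s ≠ 0) : ContinuousAt (unitVolumeCurve n) s := by
  unfold unitVolumeCurve
  fun_prop (disch := simp [hs])

lemma unitVolumeCurve_mem_unitVolume (hs : 0 < s) : unitVolumeCurve n s ∈ unitVolume n := by
  refine ⟨Real.rpow_pos_of_pos hs _, inv_pos.2 (pow_pos hs 2), ?_⟩
  have hpow : (s ^ 2)⁻¹ ^ ((n - 1) * (n - 2) / 2) = ((s ^ (n - 2)) ^ (n - 1))⁻¹ := by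
    rw [Real.inv_rpow (by positivity), ← Real.rpow_natCast, ← Real.rpow_mul hs.le,
      ← Real.rpow_mul hs.le]
    congr 2
    ring
  simp only [unitVolumeCurve, hpow]
  exact mul_inv_cancel₀ (by positivity)

lemma hasDerivAt_scalarCurvature_comp_unitVolumeCurve (hs : 0 < s) :
    HasDerivAt (scalarCurvature n ∘ unitVolumeCurve n)
      ((n - 1) * (n - 2) * (s ^ n - 1) ^ 2 / s ^ (2 * n - 1)) s := by
  have hx : HasDerivAt (fun t : ℝ => t ^ (n - 2)) ((n - 2) * (s ^ (n - 2) / s)) s := by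
    simpa [Real.rpow_sub_one hs.ne'] using
      Real.hasDerivAt_rpow_const (p := n - 2) (Or.inl hs.ne')
  have hy := (hasDerivAt_pow 2 s).inv (by positivity)
  have hx0 : s ^ (n - 2) ≠ 0 := by positivity
  have hfun : scalarCurvature n ∘ unitVolumeCurve n = fun t => 2 * (n - 1) * (t ^ (n - 2))⁻¹
      + (n - 1) * (n - 2) / 2 * t ^ 2 - (n - 2) / 2 * ((t ^ 2)⁻¹ / (t ^ (n - 2)) ^ 2) := by
    funext t
    simp only [Function.comp, scalarCurvature, unitVolumeCurve, div_eq_mul_inv, mul_inv, inv_inv]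
    ring
  rw [hfun]
  refine (((hx.inv hx0).const_mul (2 * (n - 1))).add
    ((hasDerivAt_pow 2 s).const_mul ((n - 1) * (n - 2) / 2)) |>.sub
    ((hy.div (hx.pow 2) (pow_ne_zero 2 hx0)).const_mul ((n - 2) / 2))).congr_deriv ?_
  -- Expressing `sⁿ` and `s²ⁿ⁻¹` through `s ^ (n - 2)` makes the identity rational.
  have hsn : s ^ n = s ^ (n - 2) * s ^ 2 := by
    rw [← Real.rpow_natCast, ← Real.rpow_add hs]
    norm_num
  have hs2n : s ^ (2 * n - 1) = (s ^ (n - 2)) ^ 2 * s ^ 3 := by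
    rw [← Real.rpow_natCast, ← Real.rpow_natCast, ← Real.rpow_mul hs.le, ← Real.rpow_add hs]
    norm_num
    ring_nf
  rw [hsn, hs2n]
  simp only [Pi.inv_apply, Pi.pow_apply]
  field_simp
  ring

lemma strictMonoOn_scalarCurvature_comp_unitVolumeCurve (hn : 2 < n) :
    StrictMonoOn (scalarCurvature n ∘ unitVolumeCurve n) (Ici 1) := by
  have hderiv (s : ℝ) (hs : s ∈ Ici 1) :=
    hasDerivAt_scalarCurvature_comp_unitVolumeCurve (n := n) (zero_lt_one.trans_le hs)
  refine strictMonoOn_of_deriv_pos (convex_Ici 1)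
    (fun s hs ↦ (hderiv s hs).continuousAt.continuousWithinAt) fun s hs ↦ ?_
  rw [interior_Ici] at hs
  rw [(hderiv s (mem_Ici.2 hs.le)).deriv]
  have hsn : 1 < s ^ n := Real.one_lt_rpow hs (by linarith)
  have : 0 < s ^ (2 * n - 1) := Real.rpow_pos_of_pos (zero_lt_one.trans hs) _
  have : 0 < (s ^ n - 1) ^ 2 := by nlinarith
  have : 0 < (n - 1) * (n - 2) := by nlinarith
  positivity

end

/-- The standard metric on `SO(2n)/Tⁿ`, `n ≥ 4`, is not a local maximum of scalar
curvature among unit-volume invariant metrics: the scalar curvature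
`h(x,y) = 2(n−1)/x + (n−1)(n−2)/(2y) − (n−2)y/(2x²)` restricted to the unit-volume
variety `V = {x > 0, y > 0, x^{n−1} y^{(n−1)(n−2)/2} = 1}` does not have a local
maximum at `(1,1)`. -/
theorem scal_SO2n_not_localMaxOn (n : ℕ) (hn : 4 ≤ n)
    (h : ℝ × ℝ → ℝ)
    (hh : ∀ p : ℝ × ℝ, h p = 2 * ((n : ℝ) - 1) / p.1
      + ((n : ℝ) - 1) * ((n : ℝ) - 2) / (2 * p.2)
      - ((n : ℝ) - 2) * p.2 / (2 * p.1 ^ 2))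
    (V : Set (ℝ × ℝ))
    (hV : V = {p : ℝ × ℝ | 0 < p.1 ∧ 0 < p.2 ∧
      p.1 ^ ((n : ℝ) - 1) * p.2 ^ (((n : ℝ) - 1) * ((n : ℝ) - 2) / 2) = 1}) :
    ∀ U ∈ nhds ((1, 1) : ℝ × ℝ), ∃ p ∈ U, p ∈ V ∧ h (1, 1) < h p := by
  intro U hU
  have hcurve : ∀ᶠ s in 𝓝[>] 1, unitVolumeCurve n s ∈ U := nhdsWithin_le_nhds <|
    (continuousAt_unitVolumeCurve one_ne_zero).tendsto.eventually_mem (by simpa using hU)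
  obtain ⟨s, hsU, hs⟩ := (hcurve.and self_mem_nhdsWithin).exists
  have hn2 : (2 : ℝ) < n := by exact_mod_cast (by omega : 2 < n)
  refine ⟨unitVolumeCurve n s, hsU,
    hV ▸ unitVolumeCurve_mem_unitVolume (zero_lt_one.trans hs), ?_⟩
  obtain rfl : h = scalarCurvature n := funext hh
  simpa using
    strictMonoOn_scalarCurvature_comp_unitVolumeCurve hn2 self_mem_Ici (mem_Ici.2 hs.le) hs
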